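/- If a nonempty finite sequence of positive symbol codes contains the numeral S^q 0 as a contiguous subsequence, then q is strictly less than the Gödel number of the whole sequence. In other words, a formula cannot contain a numeral denoting a natural number greater than or equal to the Gödel number of the formula itself. -/

import Mathlib

/-- Gödel number of a sequence of symbol codes. -/
noncomputable def godelNum (l : List ℕ) : ℕ :=
  ∏ i ∈ Finset.range l.length, (Nat.nth Nat.Prime i) ^ l.getD i 0

/-- The numeral `S^q 0`. -/
def numeral (q : ℕ) : List ℕ := List.replicate q 3 ++ [1]

/-- If a sequence of positive symbol codes contains the numeral `S^q 0` as a
contiguous subsequence, then `q` is less than the Gödel number of the sequence. -/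
theorem lt_godelNum_of_contains_numeral (a b : List ℕ) (q : ℕ)
    (hpos : ∀ c ∈ a ++ numeral q ++ b, 1 ≤ c) :
    q < godelNum (a ++ numeral q ++ b) := by
  set l := a ++ numeral q ++ b with hl
  have hlen : q + 1 ≤ l.length := by
    simp [hl, numeral]
    omega
  have key : 2 ^ l.length ≤ godelNum l := by
    unfold godelNum
    have : (2:ℕ) ^ l.length = ∏ _i ∈ Finset.range l.length, 2 := by simp
    rw [this]
    apply Finset.prod_le_prod
    · intro i _; norm_num
    · intro i hi
      rw [Finset.mem_range] at hi
      have hp : 2 ≤ Nat.nth Nat.Prime i := (Nat.prime_nth_prime i).two_le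
      have hc : 1 ≤ l.getD i 0 := by
        rw [List.getD_eq_getElem l 0 hi]
        exact hpos _ (List.getElem_mem hi)
      calc 2 ≤ Nat.nth Nat.Prime i := hp
        _ = Nat.nth Nat.Prime i ^ 1 := (pow_one _).symm
        _ ≤ Nat.nth Nat.Prime i ^ l.getD i 0 :=
          Nat.pow_le_pow_right (by omega) hc
  have h2 : l.length < 2 ^ l.length := Nat.lt_two_pow_self
  omega
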